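/- Let a = −0.005, b = 1.01, and n = 2. For every real ρ with 0 < ρ and every r ∈ [0.01, 1] satisfying r = a·ρ² + b, the inequality ρ²·r ≥ n holds (equivalently a·ρ² + b ≥ n/ρ²). -/
import Mathlib


/-- Soundness of the convex reformulation of the risk-tube constraint: with
`a = −0.005`, `b = 1.01`, `n = 2`, any `ρ > 0` and `r ∈ [0.01, 1]` with
`r = a·ρ² + b` satisfy `ρ²·r ≥ n`. -/
theorem risk_tube_relaxation_sound (ρ r : ℝ) (hρ : 0 < ρ)
    (hr₁ : 0.01 ≤ r) (hr₂ : r ≤ 1)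
    (heq : r = (-0.005) * ρ ^ 2 + 1.01) :
    ρ ^ 2 * r ≥ 2 := by
  nlinarith [sq_nonneg ρ, sq_nonneg (ρ^2 - 2), sq_nonneg (ρ^2 - 200)]
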